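/- For all t ≥ 0, φ(t) = H ∫₀^t e^{−Γs} s^{2H−1} ds + H Γ t ∫₀^t e^{−Γs} s^{2H−1} ds − H Γ ∫₀^t e^{−Γs} s^{2H} ds. -/

import Mathlib

open MeasureTheory Set

/-- `U(t) = H Γ ∫₀^t ∫₀^s e^{−Γ(s−u)} (s^{2H−1} − (s−u)^{2H−1}) du ds` (stated with
entrywise Bochner integrals). -/
noncomputable def fouU {d : ℕ} (Γ : Matrix (Fin d) (Fin d) ℝ) (H : ℝ) (t : ℝ) :
    Matrix (Fin d) (Fin d) ℝ :=
  H • (Γ * Matrix.of fun i j =>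
    ∫ s in (0 : ℝ)..t, ∫ u in (0 : ℝ)..s,
      NormedSpace.exp ((-(s - u)) • Γ) i j *
        (s ^ (2 * H - 1) - (s - u) ^ (2 * H - 1)))

/-- `φ(t) = ½ t^{2H} I − U(t)`. -/
noncomputable def fouPhi {d : ℕ} (Γ : Matrix (Fin d) (Fin d) ℝ) (H : ℝ) (t : ℝ) :
    Matrix (Fin d) (Fin d) ℝ :=
  (1 / 2 * t ^ (2 * H)) • (1 : Matrix (Fin d) (Fin d) ℝ) - fouU Γ H t

namespace FouAux

open scoped Matrix
open NormedSpace intervalIntegral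

attribute [local instance] Matrix.linftyOpNormedRing Matrix.linftyOpNormedAlgebra

variable {d : ℕ}

noncomputable instance fouENorm : ENormedAddMonoid (Matrix (Fin d) (Fin d) ℝ) :=
  NormedAddCommGroup.toENormedAddCommMonoid.toENormedAddMonoid

/-- The matrix exponential `e^{-sΓ}`. -/
noncomputable def mA (Γ : Matrix (Fin d) (Fin d) ℝ) (s : ℝ) : Matrix (Fin d) (Fin d) ℝ :=
  exp (s • (-Γ))

lemma mA_eq (Γ : Matrix (Fin d) (Fin d) ℝ) (s : ℝ) : mA Γ s = exp ((-s) • Γ) := by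
  rw [mA, smul_neg, neg_smul]

lemma mA_continuous (Γ : Matrix (Fin d) (Fin d) ℝ) : Continuous (mA Γ) :=
  exp_continuous.comp (continuous_id.smul continuous_const)

lemma mA_zero (Γ : Matrix (Fin d) (Fin d) ℝ) : mA Γ 0 = 1 := by
  rw [mA, zero_smul, exp_zero]

lemma mA_hasDerivAt (Γ : Matrix (Fin d) (Fin d) ℝ) (s : ℝ) :
    HasDerivAt (mA Γ) (-(Γ * mA Γ s)) s := by
  have h := hasDerivAt_exp_smul_const' (𝕂 := ℝ) (-Γ) s
  rw [neg_mul] at h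
  exact h

lemma mA_intervalIntegrable (Γ : Matrix (Fin d) (Fin d) ℝ) (a b : ℝ) :
    IntervalIntegrable (mA Γ) volume a b :=
  (mA_continuous Γ).intervalIntegrable a b

/-- Primitive of `mA`. -/
noncomputable def mB (Γ : Matrix (Fin d) (Fin d) ℝ) (s : ℝ) : Matrix (Fin d) (Fin d) ℝ :=
  ∫ v in (0:ℝ)..s, mA Γ v

lemma mB_continuous (Γ : Matrix (Fin d) (Fin d) ℝ) : Continuous (mB Γ) :=
  intervalIntegral.continuous_primitive (mA_intervalIntegrable Γ) 0

/-- The entry-evaluation continuous linear map. -/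
noncomputable def entryCLM (i j : Fin d) : Matrix (Fin d) (Fin d) ℝ →L[ℝ] ℝ :=
  LinearMap.toContinuousLinearMap
    { toFun := fun M => M i j
      map_add' := fun _ _ => rfl
      map_smul' := fun _ _ => rfl }

lemma entryCLM_apply (i j : Fin d) (M : Matrix (Fin d) (Fin d) ℝ) :
    entryCLM i j M = M i j := rfl

lemma entry_integral {f : ℝ → Matrix (Fin d) (Fin d) ℝ} {a b : ℝ}
    (hf : IntervalIntegrable f volume a b) (i j : Fin d) :
    (∫ x in a..b, f x) i j = ∫ x in a..b, f x i j := by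
  have h := (entryCLM i j).intervalIntegral_comp_comm hf
  exact h.symm

/-- `Γ ∫₀^s e^{-Γv} dv = 1 - e^{-Γs}`. -/
lemma gamma_mul_mB (Γ : Matrix (Fin d) (Fin d) ℝ) (s : ℝ) :
    Γ * mB Γ s = 1 - mA Γ s := by
  have hderiv : ∀ v ∈ uIcc (0:ℝ) s, HasDerivAt (fun v => -(mA Γ v)) (Γ * mA Γ v) v := by
    intro v _
    exact (mA_hasDerivAt Γ v).neg.congr_deriv (neg_neg _)
  have hint : IntervalIntegrable (fun v => Γ * mA Γ v) volume 0 s :=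
    (continuous_const.mul (mA_continuous Γ)).intervalIntegrable 0 s
  have h1 : ∫ v in (0:ℝ)..s, Γ * mA Γ v = -(mA Γ s) - -(mA Γ 0) :=
    intervalIntegral.integral_eq_sub_of_hasDerivAt hderiv hint
  have h2 : ∫ v in (0:ℝ)..s, Γ * mA Γ v = Γ * mB Γ s := by
    have := (ContinuousLinearMap.mul ℝ (Matrix (Fin d) (Fin d) ℝ) Γ).intervalIntegral_comp_comm
      (mA_intervalIntegrable Γ 0 s)
    simpa [ContinuousLinearMap.mul_apply', mB] using this
  rw [← h2, h1, mA_zero]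
  abel

variable (H : ℝ)

/-- `∫₀^t s^{2H-1} e^{-Γs} ds`. -/
noncomputable def mC (Γ : Matrix (Fin d) (Fin d) ℝ) (t : ℝ) : Matrix (Fin d) (Fin d) ℝ :=
  ∫ v in (0:ℝ)..t, v ^ (2*H - 1) • mA Γ v

/-- `∫₀^t s^{2H} e^{-Γs} ds`. -/
noncomputable def mW (Γ : Matrix (Fin d) (Fin d) ℝ) (t : ℝ) : Matrix (Fin d) (Fin d) ℝ :=
  ∫ v in (0:ℝ)..t, v ^ (2*H) • mA Γ v

variable {H}

lemma rpow_smul_intervalIntegrable (Γ : Matrix (Fin d) (Fin d) ℝ) {r : ℝ} (hr : -1 < r)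
    (a b : ℝ) : IntervalIntegrable (fun v : ℝ => v ^ r • mA Γ v) volume a b := by
  have h0 : IntervalIntegrable (fun v : ℝ => v ^ r) volume a b :=
    intervalIntegral.intervalIntegrable_rpow' hr
  have h1 : IntervalIntegrable (fun v : ℝ => v ^ r • (1 : Matrix (Fin d) (Fin d) ℝ))
      volume a b := ⟨h0.1.smul_const _, h0.2.smul_const _⟩
  have h2 := h1.mul_continuousOn (g := mA Γ) (mA_continuous Γ).continuousOn
  have heq : (fun v : ℝ => (v ^ r • (1 : Matrix (Fin d) (Fin d) ℝ)) * mA Γ v)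
      = fun v : ℝ => v ^ r • mA Γ v := by
    funext v
    rw [smul_mul_assoc, one_mul]
  rwa [heq] at h2

lemma mC_intervalIntegrable (Γ : Matrix (Fin d) (Fin d) ℝ) (hH : 0 < H) (a b : ℝ) :
    IntervalIntegrable (fun v : ℝ => v ^ (2*H - 1) • mA Γ v) volume a b :=
  rpow_smul_intervalIntegrable Γ (by linarith) a b

lemma mW_intervalIntegrable (Γ : Matrix (Fin d) (Fin d) ℝ) (hH : 0 < H) (a b : ℝ) :
    IntervalIntegrable (fun v : ℝ => v ^ (2*H) • mA Γ v) volume a b :=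
  rpow_smul_intervalIntegrable Γ (by linarith) a b

lemma mC_continuous (Γ : Matrix (Fin d) (Fin d) ℝ) (hH : 0 < H) : Continuous (mC H Γ) :=
  intervalIntegral.continuous_primitive (mC_intervalIntegrable Γ hH) 0

lemma mW_continuous (Γ : Matrix (Fin d) (Fin d) ℝ) (hH : 0 < H) : Continuous (mW H Γ) :=
  intervalIntegral.continuous_primitive (mW_intervalIntegrable Γ hH) 0

lemma rpow_smul_continuousAt (Γ : Matrix (Fin d) (Fin d) ℝ) (r : ℝ) {x : ℝ} (hx : 0 < x) :
    ContinuousAt (fun v : ℝ => v ^ r • mA Γ v) x :=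
  (Real.continuousAt_rpow_const x r (Or.inl hx.ne')).smul (mA_continuous Γ).continuousAt

lemma rpow_smul_hasDerivAt (Γ : Matrix (Fin d) (Fin d) ℝ) {r : ℝ} (hr : -1 < r) {x : ℝ}
    (hx : 0 < x) :
    HasDerivAt (fun s => ∫ v in (0:ℝ)..s, v ^ r • mA Γ v) (x ^ r • mA Γ x) x := by
  refine intervalIntegral.integral_hasDerivAt_right
    (rpow_smul_intervalIntegrable Γ hr 0 x) ?_ (rpow_smul_continuousAt Γ r hx)
  exact ContinuousAt.stronglyMeasurableAtFilter isOpen_Ioi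
    (fun y hy => rpow_smul_continuousAt Γ r hy) x hx

/-- Integration by parts: `∫₀^t C(s) ds = t C(t) - W(t)`. -/
lemma parts (Γ : Matrix (Fin d) (Fin d) ℝ) (hH : 0 < H) {t : ℝ} (ht : 0 ≤ t) :
    ∫ s in (0:ℝ)..t, mC H Γ s = t • mC H Γ t - mW H Γ t := by
  have hFcont : ContinuousOn (fun s => s • mC H Γ s - mW H Γ s) (Icc 0 t) :=
    ((continuous_id.smul (mC_continuous Γ hH)).sub (mW_continuous Γ hH)).continuousOn
  have hderiv : ∀ x ∈ Ioo (0:ℝ) t,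
      HasDerivWithinAt (fun s => s • mC H Γ s - mW H Γ s) (mC H Γ x) (Ioi x) x := by
    intro x hx
    have hx0 : 0 < x := hx.1
    have hC : HasDerivAt (mC H Γ) (x ^ (2*H - 1) • mA Γ x) x :=
      rpow_smul_hasDerivAt Γ (by linarith) hx0
    have hW : HasDerivAt (mW H Γ) (x ^ (2*H) • mA Γ x) x :=
      rpow_smul_hasDerivAt Γ (by linarith) hx0
    have hsC := (hasDerivAt_id x).smul hC
    have hmul : x • (x ^ (2*H - 1) • mA Γ x) = x ^ (2*H) • mA Γ x := by
      rw [smul_smul]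
      congr 1
      calc x * x ^ (2*H - 1) = x ^ (1:ℝ) * x ^ (2*H - 1) := by rw [Real.rpow_one]
        _ = x ^ (1 + (2*H - 1)) := (Real.rpow_add hx0 _ _).symm
        _ = x ^ (2*H) := by ring_nf
    have h := (hsC.sub hW)
    simp only [id_eq, one_smul] at h
    rw [hmul] at h
    have h' : HasDerivAt (fun s => s • mC H Γ s - mW H Γ s) (mC H Γ x) x := by
      exact h.congr_deriv (by abel)
    exact h'.hasDerivWithinAt
  have hint : IntervalIntegrable (mC H Γ) volume 0 t :=
    (mC_continuous Γ hH).intervalIntegrable 0 t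
  have h := intervalIntegral.integral_eq_sub_of_hasDeriv_right_of_le ht hFcont hderiv hint
  rw [h]
  simp [mC, mW]

lemma rpow_smul_cont_intervalIntegrable {F : ℝ → Matrix (Fin d) (Fin d) ℝ}
    (hF : Continuous F) {r : ℝ} (hr : -1 < r) (a b : ℝ) :
    IntervalIntegrable (fun v : ℝ => v ^ r • F v) volume a b := by
  have h0 : IntervalIntegrable (fun v : ℝ => v ^ r) volume a b :=
    intervalIntegral.intervalIntegrable_rpow' hr
  have h1 : IntervalIntegrable (fun v : ℝ => v ^ r • (1 : Matrix (Fin d) (Fin d) ℝ))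
      volume a b := ⟨h0.1.smul_const _, h0.2.smul_const _⟩
  have h2 := h1.mul_continuousOn (g := F) hF.continuousOn
  have heq : (fun v : ℝ => (v ^ r • (1 : Matrix (Fin d) (Fin d) ℝ)) * F v)
      = fun v : ℝ => v ^ r • F v := by
    funext v
    rw [smul_mul_assoc, one_mul]
  rwa [heq] at h2

lemma entry_mC (Γ : Matrix (Fin d) (Fin d) ℝ) (hH : 0 < H) (t : ℝ) :
    (Matrix.of fun i j => ∫ s in (0:ℝ)..t, exp ((-s) • Γ) i j * s ^ (2 * H - 1))
      = mC H Γ t := by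
  ext i j
  simp only [Matrix.of_apply, mC]
  rw [entry_integral (mC_intervalIntegrable Γ hH 0 t) i j]
  refine intervalIntegral.integral_congr fun s _ => ?_
  rw [Matrix.smul_apply, mA_eq, smul_eq_mul, mul_comm]

lemma entry_mW (Γ : Matrix (Fin d) (Fin d) ℝ) (hH : 0 < H) (t : ℝ) :
    (Matrix.of fun i j => ∫ s in (0:ℝ)..t, exp ((-s) • Γ) i j * s ^ (2 * H))
      = mW H Γ t := by
  ext i j
  simp only [Matrix.of_apply, mW]
  rw [entry_integral (mW_intervalIntegrable Γ hH 0 t) i j]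
  refine intervalIntegral.integral_congr fun s _ => ?_
  rw [Matrix.smul_apply, mA_eq, smul_eq_mul, mul_comm]

lemma inner_eq (Γ : Matrix (Fin d) (Fin d) ℝ) (hH : 0 < H) (s : ℝ) (i j : Fin d) :
    (∫ u in (0:ℝ)..s, exp ((-(s - u)) • Γ) i j * (s ^ (2 * H - 1) - (s - u) ^ (2 * H - 1)))
      = (s ^ (2 * H - 1) • mB Γ s - mC H Γ s) i j := by
  have hsub : (∫ u in (0:ℝ)..s,
        exp ((-(s - u)) • Γ) i j * (s ^ (2 * H - 1) - (s - u) ^ (2 * H - 1)))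
      = ∫ v in (0:ℝ)..s, exp ((-v) • Γ) i j * (s ^ (2 * H - 1) - v ^ (2 * H - 1)) := by
    have h := intervalIntegral.integral_comp_sub_left (a := (0:ℝ)) (b := s)
      (fun v => exp ((-v) • Γ) i j * (s ^ (2 * H - 1) - v ^ (2 * H - 1))) s
    simpa using h
  rw [hsub]
  have hint1 : IntervalIntegrable (fun v : ℝ => s ^ (2 * H - 1) • mA Γ v) volume 0 s := by
    have := (mA_intervalIntegrable Γ 0 s).smul (s ^ (2 * H - 1))
    exact this
  have hint : IntervalIntegrable
      (fun v : ℝ => s ^ (2 * H - 1) • mA Γ v - v ^ (2 * H - 1) • mA Γ v) volume 0 s :=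
    hint1.sub (mC_intervalIntegrable Γ hH 0 s)
  have h2 : (∫ v in (0:ℝ)..s, exp ((-v) • Γ) i j * (s ^ (2 * H - 1) - v ^ (2 * H - 1)))
      = (∫ v in (0:ℝ)..s, (s ^ (2 * H - 1) • mA Γ v - v ^ (2 * H - 1) • mA Γ v)) i j := by
    rw [entry_integral hint i j]
    refine intervalIntegral.integral_congr fun v _ => ?_
    rw [Matrix.sub_apply, Matrix.smul_apply, Matrix.smul_apply, mA_eq, smul_eq_mul, smul_eq_mul]
    ring
  rw [h2]
  congr 1
  rw [intervalIntegral.integral_sub hint1 (mC_intervalIntegrable Γ hH 0 s),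
    intervalIntegral.integral_smul]
  rfl

lemma outer_intervalIntegrable (Γ : Matrix (Fin d) (Fin d) ℝ) (hH : 0 < H) (t : ℝ) :
    IntervalIntegrable (fun s : ℝ => s ^ (2 * H - 1) • mB Γ s - mC H Γ s) volume 0 t :=
  (rpow_smul_cont_intervalIntegrable (mB_continuous Γ) (by linarith) 0 t).sub
    ((mC_continuous Γ hH).intervalIntegrable 0 t)

lemma double_eq (Γ : Matrix (Fin d) (Fin d) ℝ) (hH : 0 < H) (t : ℝ) :
    (Matrix.of fun i j => ∫ s in (0:ℝ)..t, ∫ u in (0:ℝ)..s,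
        exp ((-(s - u)) • Γ) i j * (s ^ (2 * H - 1) - (s - u) ^ (2 * H - 1)))
      = ∫ s in (0:ℝ)..t, (s ^ (2 * H - 1) • mB Γ s - mC H Γ s) := by
  ext i j
  rw [Matrix.of_apply, entry_integral (outer_intervalIntegrable Γ hH t) i j]
  exact intervalIntegral.integral_congr fun s _ => inner_eq Γ hH s i j

lemma mul_integral_comm (Γ : Matrix (Fin d) (Fin d) ℝ) {f : ℝ → Matrix (Fin d) (Fin d) ℝ}
    {a b : ℝ} (hf : IntervalIntegrable f volume a b) :
    Γ * ∫ x in a..b, f x = ∫ x in a..b, Γ * f x := by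
  have h := (ContinuousLinearMap.mul ℝ (Matrix (Fin d) (Fin d) ℝ) Γ).intervalIntegral_comp_comm hf
  simpa [ContinuousLinearMap.mul_apply'] using h.symm

lemma fouU_eq (Γ : Matrix (Fin d) (Fin d) ℝ) (hH : 0 < H) {t : ℝ} (ht : 0 ≤ t) :
    fouU Γ H t = H • ((t ^ (2 * H) / (2 * H)) • (1 : Matrix (Fin d) (Fin d) ℝ)
      - mC H Γ t - t • (Γ * mC H Γ t) + Γ * mW H Γ t) := by
  rw [fouU, double_eq Γ hH t]
  congr 1
  rw [mul_integral_comm Γ (outer_intervalIntegrable Γ hH t)]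
  have hcongr : ∀ s : ℝ, Γ * (s ^ (2 * H - 1) • mB Γ s - mC H Γ s)
      = (s ^ (2 * H - 1) • (1 : Matrix (Fin d) (Fin d) ℝ) - s ^ (2 * H - 1) • mA Γ s)
        - Γ * mC H Γ s := by
    intro s
    rw [mul_sub, mul_smul_comm, gamma_mul_mB, smul_sub]
  have h1 : (∫ s in (0:ℝ)..t, Γ * (s ^ (2 * H - 1) • mB Γ s - mC H Γ s))
      = ∫ s in (0:ℝ)..t,
        ((s ^ (2 * H - 1) • (1 : Matrix (Fin d) (Fin d) ℝ) - s ^ (2 * H - 1) • mA Γ s)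
          - Γ * mC H Γ s) :=
    intervalIntegral.integral_congr fun s _ => hcongr s
  rw [h1]
  have hi1 : IntervalIntegrable
      (fun s : ℝ => s ^ (2 * H - 1) • (1 : Matrix (Fin d) (Fin d) ℝ)) volume 0 t := by
    have h0 : IntervalIntegrable (fun v : ℝ => v ^ (2 * H - 1)) volume 0 t :=
      intervalIntegral.intervalIntegrable_rpow' (by linarith)
    exact ⟨h0.1.smul_const _, h0.2.smul_const _⟩
  have hi2 : IntervalIntegrable (fun s : ℝ => s ^ (2 * H - 1) • mA Γ s) volume 0 t :=
    mC_intervalIntegrable Γ hH 0 t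
  have hi3 : IntervalIntegrable (fun s : ℝ => Γ * mC H Γ s) volume 0 t :=
    (continuous_const.mul (mC_continuous Γ hH)).intervalIntegrable 0 t
  rw [intervalIntegral.integral_sub (hi1.sub hi2) hi3, intervalIntegral.integral_sub hi1 hi2]
  have e1 : (∫ s in (0:ℝ)..t, s ^ (2 * H - 1) • (1 : Matrix (Fin d) (Fin d) ℝ))
      = (t ^ (2 * H) / (2 * H)) • (1 : Matrix (Fin d) (Fin d) ℝ) := by
    rw [intervalIntegral.integral_smul_const]
    congr 1
    rw [integral_rpow (Or.inl (by linarith))]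
    rw [show 2 * H - 1 + 1 = 2 * H by ring, Real.zero_rpow (by positivity : 2 * H ≠ 0)]
    ring
  have e2 : (∫ s in (0:ℝ)..t, s ^ (2 * H - 1) • mA Γ s) = mC H Γ t := rfl
  have e3 : (∫ s in (0:ℝ)..t, Γ * mC H Γ s) = t • (Γ * mC H Γ t) - Γ * mW H Γ t := by
    rw [← mul_integral_comm Γ ((mC_continuous Γ hH).intervalIntegrable 0 t),
      parts Γ hH ht, mul_sub, mul_smul_comm]
  rw [e1, e2, e3]
  abel

theorem stmt12_aux (d : ℕ) (hd : 1 ≤ d) (Γ : Matrix (Fin d) (Fin d) ℝ)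
    (hΓs : Γ.IsSymm) (hΓp : Γ.PosDef) (H : ℝ) (hH : H ∈ Set.Ioc (0 : ℝ) (1 / 2)) :
    ∀ t : ℝ, 0 ≤ t →
      fouPhi Γ H t =
        H • (Matrix.of fun i j =>
            ∫ s in (0 : ℝ)..t, NormedSpace.exp ((-s) • Γ) i j * s ^ (2 * H - 1)) +
        (H * t) • (Γ * Matrix.of fun i j =>
            ∫ s in (0 : ℝ)..t, NormedSpace.exp ((-s) • Γ) i j * s ^ (2 * H - 1)) -
        H • (Γ * Matrix.of fun i j =>
            ∫ s in (0 : ℝ)..t, NormedSpace.exp ((-s) • Γ) i j * s ^ (2 * H)) := by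
  intro t ht
  have hH0 : 0 < H := hH.1
  rw [fouPhi, fouU_eq Γ hH0 ht, entry_mC Γ hH0 t, entry_mW Γ hH0 t]
  have hhalf : H • ((t ^ (2 * H) / (2 * H)) • (1 : Matrix (Fin d) (Fin d) ℝ))
      = (1 / 2 * t ^ (2 * H)) • (1 : Matrix (Fin d) (Fin d) ℝ) := by
    rw [smul_smul]
    congr 1
    field_simp
  rw [smul_add, smul_sub, smul_sub, hhalf, smul_smul, ← mul_smul_comm, ← smul_smul H t]
  abel

end FouAux

/-- For all `t ≥ 0`,
`φ(t) = H ∫₀^t e^{−Γs}s^{2H−1}ds + HΓt ∫₀^t e^{−Γs}s^{2H−1}ds − HΓ ∫₀^t e^{−Γs}s^{2H}ds`. -/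
theorem stmt12 (d : ℕ) (hd : 1 ≤ d) (Γ : Matrix (Fin d) (Fin d) ℝ)
    (hΓs : Γ.IsSymm) (hΓp : Γ.PosDef) (H : ℝ) (hH : H ∈ Set.Ioc (0 : ℝ) (1 / 2)) :
    ∀ t : ℝ, 0 ≤ t →
      fouPhi Γ H t =
        H • (Matrix.of fun i j =>
            ∫ s in (0 : ℝ)..t, NormedSpace.exp ((-s) • Γ) i j * s ^ (2 * H - 1)) +
        (H * t) • (Γ * Matrix.of fun i j =>
            ∫ s in (0 : ℝ)..t, NormedSpace.exp ((-s) • Γ) i j * s ^ (2 * H - 1)) -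
        H • (Γ * Matrix.of fun i j =>
            ∫ s in (0 : ℝ)..t, NormedSpace.exp ((-s) • Γ) i j * s ^ (2 * H)) := by
  exact FouAux.stmt12_aux d hd Γ hΓs hΓp H hH
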